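/- Let L > 0 and c_p > 0. For each t ∈ ℕ let f_t : E → ℝ be convex, differentiable and L-smooth, and suppose there is a common minimizer x* ∈ E with f_t(x*) ≤ f_t(y) for all y ∈ E and all t (interpolation). Starting from x_0 ∈ E, define SGD iterates x_{t+1} = x_t − η_t∇f_t(x_t), where (η_t) are the AdaSPS stepsizes with lower bounds ℓ_t = f_t(x*), and assume ∇f_t(x_t) ≠ 0 for all t. If c_p·√(f_0(x_0) − f_0(x*)) ≥ 1, then for every T ≥ 1: Σ_{t=1}^{T} (f_t(x_t) − f_t(x*)) ≤ 4·c_p²·L²·‖x_0 − x*‖⁴. -/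

import Mathlib

/-!
Smoothness and interpolation give `‖∇f_t(x_t)‖² ≤ 2L (f_t(x_t) - f_t(x*))`, so every AdaSPS
stepsize up to time `T` is at least `1 / (2 L c_p √S_T)` with
`S_T = Σ_{t ≤ T} (f_t(x_t) - f_t(x*))`. The scale condition `c_p √(f_0(x_0) - f_0(x*)) ≥ 1`
makes `η_t ‖∇f_t(x_t)‖² ≤ f_t(x_t) - f_t(x*)`, and then convexity gives
`‖x_{t+1} - x*‖² ≤ ‖x_t - x*‖² - η_t (f_t(x_t) - f_t(x*))`. Telescoping yields
`S_T ≤ 2 L c_p √S_T ‖x_0 - x*‖²`, that is `√S_T ≤ 2 L c_p ‖x_0 - x*‖²`.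
-/

open Finset RealInnerProductSpace

section Smooth

variable {E : Type*} [NormedAddCommGroup E] [InnerProductSpace ℝ E] [CompleteSpace E]
  {L : ℝ} {f : E → ℝ} {G : E → E}

theorem le_add_inner_add_of_lipschitz_gradient (hgrad : ∀ y, HasGradientAt f (G y) y)
    (hlip : ∀ u v, ‖G u - G v‖ ≤ L * ‖u - v‖) (x v : E) :
    f (x + v) ≤ f x + ⟪G x, v⟫ + L / 2 * ‖v‖ ^ 2 := by
  set φ : ℝ → ℝ := fun s => f (x + s • v) - s * ⟪G x, v⟫ - L / 2 * s ^ 2 * ‖v‖ ^ 2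
  have hφ : ∀ s, HasDerivAt φ (⟪G (x + s • v), v⟫ - ⟪G x, v⟫ - L * s * ‖v‖ ^ 2) s := by
    intro s
    have hline : HasDerivAt (fun s : ℝ => x + s • v) v s := by
      simpa using ((hasDerivAt_id s).smul_const v).const_add x
    have hf := (hgrad (x + s • v)).hasFDerivAt.comp_hasDerivAt s hline
    simp only [InnerProductSpace.toDual_apply_apply] at hf
    have hlin : HasDerivAt (fun s : ℝ => s * ⟪G x, v⟫) ⟪G x, v⟫ s := by
      simpa using (hasDerivAt_id s).mul_const ⟪G x, v⟫
    have hquad : HasDerivAt (fun s : ℝ => L / 2 * s ^ 2 * ‖v‖ ^ 2) (L * s * ‖v‖ ^ 2) s := by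
      refine (((hasDerivAt_pow 2 s).const_mul (L / 2)).mul_const (‖v‖ ^ 2)).congr_deriv ?_
      rw [show (2 : ℕ) - 1 = 1 from rfl, pow_one]
      push_cast
      ring
    exact (hf.sub hlin).sub hquad
  have hanti : AntitoneOn φ (Set.Ici 0) := by
    refine antitoneOn_of_hasDerivWithinAt_nonpos (convex_Ici 0)
      (fun s _ => (hφ s).continuousAt.continuousWithinAt) (fun s _ => (hφ s).hasDerivWithinAt) ?_
    intro s hs
    rw [interior_Ici, Set.mem_Ioi] at hs
    calc ⟪G (x + s • v), v⟫ - ⟪G x, v⟫ - L * s * ‖v‖ ^ 2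
        = ⟪G (x + s • v) - G x, v⟫ - L * s * ‖v‖ ^ 2 := by rw [inner_sub_left]
      _ ≤ ‖G (x + s • v) - G x‖ * ‖v‖ - L * s * ‖v‖ ^ 2 := by gcongr; exact real_inner_le_norm _ _
      _ ≤ L * ‖(x + s • v) - x‖ * ‖v‖ - L * s * ‖v‖ ^ 2 := by gcongr; exact hlip _ _
      _ = 0 := by
        rw [add_sub_cancel_left, norm_smul, Real.norm_of_nonneg hs.le]; ring
  have h := hanti (Set.mem_Ici.2 le_rfl) (Set.mem_Ici.2 zero_le_one) zero_le_one
  simp only [φ, one_smul, zero_smul, add_zero] at h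
  linarith

theorem sq_norm_gradient_le (hL : 0 < L) (hgrad : ∀ y, HasGradientAt f (G y) y)
    (hlip : ∀ u v, ‖G u - G v‖ ≤ L * ‖u - v‖) {xmin : E} (hmin : ∀ y, f xmin ≤ f y) (y : E) :
    ‖G y‖ ^ 2 ≤ 2 * L * (f y - f xmin) := by
  have h := le_add_inner_add_of_lipschitz_gradient hgrad hlip y (-L⁻¹ • G y)
  rw [inner_smul_right, real_inner_self_eq_norm_sq, norm_smul, mul_pow, Real.norm_eq_abs,
    sq_abs] at h
  have hquad : -L⁻¹ * ‖G y‖ ^ 2 + L / 2 * ((-L⁻¹) ^ 2 * ‖G y‖ ^ 2) = -(‖G y‖ ^ 2 / (2 * L)) := by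
    field_simp; ring
  have hdiv : ‖G y‖ ^ 2 / (2 * L) ≤ f y - f xmin := by linarith [hmin (y + -L⁻¹ • G y)]
  rwa [div_le_iff₀ (by positivity), mul_comm] at hdiv

end Smooth

theorem norm_sub_smul_sub_sq_le {E : Type*} [NormedAddCommGroup E] [InnerProductSpace ℝ E]
    {x y g : E} {η δ : ℝ} (hη : 0 ≤ η) (hδ : δ ≤ ⟪g, x - y⟫) (hstep : η * ‖g‖ ^ 2 ≤ δ) :
    ‖x - η • g - y‖ ^ 2 ≤ ‖x - y‖ ^ 2 - η * δ := by
  rw [show x - η • g - y = (x - y) - η • g by abel, norm_sub_sq_real, real_inner_smul_right,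
    real_inner_comm, norm_smul, mul_pow, Real.norm_eq_abs, sq_abs]
  nlinarith [mul_le_mul_of_nonneg_left hδ hη]

namespace AdaSPS

/-- In the paper's notation `δ t = f_t(x_t) - ℓ_t` and `g t = ‖∇f_t(x_t)‖²`. -/
noncomputable def ratio (c : ℝ) (δ g : ℕ → ℝ) (t : ℕ) : ℝ :=
  δ t / (c * g t * √(∑ s ∈ range (t + 1), δ s))

noncomputable def stepsize (c : ℝ) (δ g : ℕ → ℝ) : ℕ → ℝ
  | 0 => ratio c δ g 0
  | t + 1 => min (ratio c δ g (t + 1)) (stepsize c δ g t)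

variable {c L : ℝ} {δ g : ℕ → ℝ}

theorem monotone_sum_range_succ (hδ : ∀ t, 0 ≤ δ t) :
    Monotone fun t => ∑ s ∈ range (t + 1), δ s :=
  fun _ _ h => sum_mono_set_of_nonneg hδ (range_subset_range.2 (by omega))

theorem sqrt_sum_range_succ_pos (hδ : ∀ t, 0 < δ t) (t : ℕ) :
    0 < √(∑ s ∈ range (t + 1), δ s) :=
  Real.sqrt_pos.2 (sum_pos (fun s _ => hδ s) nonempty_range_add_one)

theorem stepsize_le_ratio (t : ℕ) : stepsize c δ g t ≤ ratio c δ g t := by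
  cases t with
  | zero => exact le_rfl
  | succ t => exact min_le_left _ _

theorem stepsize_pos (hc : 0 < c) (hδ : ∀ t, 0 < δ t) (hg : ∀ t, 0 < g t) (t : ℕ) :
    0 < stepsize c δ g t := by
  have hratio : ∀ t, 0 < ratio c δ g t := fun t =>
    have := sqrt_sum_range_succ_pos hδ t
    div_pos (hδ t) (by have := hg t; positivity)
  induction t with
  | zero => exact hratio 0
  | succ t ih => exact lt_min (hratio (t + 1)) ih

theorem stepsize_mul_le (hc : 0 < c) (hδ : ∀ t, 0 < δ t) (hg : ∀ t, 0 < g t)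
    (hscale : 1 ≤ c * √(δ 0)) (t : ℕ) : stepsize c δ g t * g t ≤ δ t := by
  have hsum : δ 0 ≤ ∑ s ∈ range (t + 1), δ s := by
    simpa using monotone_sum_range_succ (fun t => (hδ t).le) (Nat.zero_le t)
  have hcS : 1 ≤ c * √(∑ s ∈ range (t + 1), δ s) := hscale.trans (by gcongr)
  calc stepsize c δ g t * g t ≤ ratio c δ g t * g t :=
        mul_le_mul_of_nonneg_right (stepsize_le_ratio t) (hg t).le
    _ = δ t / (c * √(∑ s ∈ range (t + 1), δ s)) := by
        rw [ratio]; field_simp [(hg t).ne']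
    _ ≤ δ t := div_le_self (hδ t).le hcS

theorem inv_le_stepsize (hL : 0 < L) (hc : 0 < c) (hδ : ∀ t, 0 < δ t) (hg : ∀ t, 0 < g t)
    (hgδ : ∀ t, g t ≤ 2 * L * δ t) (t : ℕ) :
    (2 * L * c * √(∑ s ∈ range (t + 1), δ s))⁻¹ ≤ stepsize c δ g t := by
  have hS := sqrt_sum_range_succ_pos hδ
  have hratio : ∀ t, (2 * L * c * √(∑ s ∈ range (t + 1), δ s))⁻¹ ≤ ratio c δ g t := by
    intro t
    have := hS t
    have := hg t
    calc (2 * L * c * √(∑ s ∈ range (t + 1), δ s))⁻¹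
        = δ t / (c * (2 * L * δ t) * √(∑ s ∈ range (t + 1), δ s)) := by
          field_simp [(hδ t).ne']
      _ ≤ ratio c δ g t := by
          unfold ratio
          gcongr
          exacts [(hδ t).le, hgδ t]
  induction t with
  | zero => exact hratio 0
  | succ t ih =>
    have := hS t
    refine le_min (hratio (t + 1)) (le_trans ?_ ih)
    gcongr (2 * L * c * √?_)⁻¹
    exact monotone_sum_range_succ (fun t => (hδ t).le) t.le_succ

theorem sum_range_le_of_stepsize (hL : 0 < L) (hc : 0 < c) (hδ : ∀ t, 0 < δ t)
    (hg : ∀ t, 0 < g t) (hgδ : ∀ t, g t ≤ 2 * L * δ t) {r : ℕ → ℝ} (hr : ∀ t, 0 ≤ r t)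
    (hstep : ∀ t, r (t + 1) ≤ r t - stepsize c δ g t * δ t) (T : ℕ) :
    ∑ t ∈ range (T + 1), δ t ≤ (2 * L * c * r 0) ^ 2 := by
  set S := ∑ t ∈ range (T + 1), δ t
  have hS : 0 < √S := sqrt_sum_range_succ_pos hδ T
  have htel : ∑ t ∈ range (T + 1), stepsize c δ g t * δ t ≤ r 0 :=
    calc ∑ t ∈ range (T + 1), stepsize c δ g t * δ t
        ≤ ∑ t ∈ range (T + 1), (r t - r (t + 1)) := sum_le_sum fun t _ => by linarith [hstep t]
      _ = r 0 - r (T + 1) := sum_range_sub' r (T + 1)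
      _ ≤ r 0 := by linarith [hr (T + 1)]
  have hterm : ∀ t ∈ range (T + 1), δ t ≤ 2 * L * c * √S * (stepsize c δ g t * δ t) := by
    intro t ht
    have hinv : (2 * L * c * √S)⁻¹ ≤ stepsize c δ g t := by
      refine le_trans ?_ (inv_le_stepsize hL hc hδ hg hgδ t)
      have := sqrt_sum_range_succ_pos hδ t
      gcongr (2 * L * c * √?_)⁻¹
      exact monotone_sum_range_succ (fun t => (hδ t).le) (mem_range_succ_iff.1 ht)
    calc δ t = 2 * L * c * √S * ((2 * L * c * √S)⁻¹ * δ t) := by field_simp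
      _ ≤ 2 * L * c * √S * (stepsize c δ g t * δ t) := by
          have := hδ t
          gcongr
  have hSle : √S * √S ≤ 2 * L * c * r 0 * √S :=
    calc √S * √S = S := Real.mul_self_sqrt (sum_pos (fun t _ => hδ t) nonempty_range_add_one).le
      _ ≤ ∑ t ∈ range (T + 1), 2 * L * c * √S * (stepsize c δ g t * δ t) := sum_le_sum hterm
      _ ≤ 2 * L * c * √S * r 0 := by rw [← mul_sum]; gcongr
      _ = 2 * L * c * r 0 * √S := by ring
  have := hr 0
  exact (Real.sqrt_le_left (by positivity)).1 (le_of_mul_le_mul_right hSle hS)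

end AdaSPS

/-- AdaSPS under interpolation: with convex, `L`-smooth `f t` sharing a common
minimizer `x*`, SGD iterates with AdaSPS stepsizes (lower bounds `ℓ t = f t x*`),
nonzero gradients at the iterates, and `c_p·√(f_0(x_0) − f_0(x*)) ≥ 1`, one has for
every `T ≥ 1`: `Σ_{t=1}^{T} (f_t(x_t) − f_t(x*)) ≤ 4 c_p² L² ‖x_0 − x*‖⁴`. -/
theorem stmt_12 {d : ℕ} (L c_p : ℝ) (hL : 0 < L) (hcp : 0 < c_p)
    (xstar : EuclideanSpace ℝ (Fin d))
    (f : ℕ → EuclideanSpace ℝ (Fin d) → ℝ)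
    (G : ℕ → EuclideanSpace ℝ (Fin d) → EuclideanSpace ℝ (Fin d))
    (x : ℕ → EuclideanSpace ℝ (Fin d)) (η : ℕ → ℝ)
    (hgrad : ∀ t y, HasGradientAt (f t) (G t y) y)
    (hconv : ∀ t u v, f t v ≥ f t u + ⟪G t u, v - u⟫)
    (hsmooth : ∀ t u v, ‖G t u - G t v‖ ≤ L * ‖u - v‖)
    (hmin : ∀ t y, f t xstar ≤ f t y)
    (hGne : ∀ t, G t (x t) ≠ 0)
    (hη0 : η 0 = (f 0 (x 0) - f 0 xstar) /
      (c_p * ‖G 0 (x 0)‖ ^ 2 * Real.sqrt (f 0 (x 0) - f 0 xstar)))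
    (hη : ∀ t, η (t + 1) = min
      ((f (t + 1) (x (t + 1)) - f (t + 1) xstar) /
        (c_p * ‖G (t + 1) (x (t + 1))‖ ^ 2 *
          Real.sqrt (∑ s ∈ range (t + 2), (f s (x s) - f s xstar))))
      (η t))
    (hx : ∀ t, x (t + 1) = x t - η t • G t (x t))
    (hscale : 1 ≤ c_p * Real.sqrt (f 0 (x 0) - f 0 xstar)) :
    ∀ T : ℕ, 1 ≤ T →
      (∑ t ∈ Finset.Icc 1 T, (f t (x t) - f t xstar)) ≤
        4 * c_p ^ 2 * L ^ 2 * ‖x 0 - xstar‖ ^ 4 := by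
  intro T _
  set δ : ℕ → ℝ := fun t => f t (x t) - f t xstar
  set g : ℕ → ℝ := fun t => ‖G t (x t)‖ ^ 2
  have hgδ : ∀ t, g t ≤ 2 * L * δ t :=
    fun t => sq_norm_gradient_le hL (hgrad t) (hsmooth t) (hmin t) (x t)
  have hg : ∀ t, 0 < g t := fun t => pow_pos (norm_pos_iff.2 (hGne t)) 2
  have hδ : ∀ t, 0 < δ t := fun t => by nlinarith [hgδ t, hg t]
  have hstepsize : η = AdaSPS.stepsize c_p δ g := by
    funext t
    induction t with
    | zero => simpa [AdaSPS.stepsize, AdaSPS.ratio] using hη0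
    | succ t ih => rw [hη, ih]; rfl
  have hdescent : ∀ t, ‖x (t + 1) - xstar‖ ^ 2 ≤ ‖x t - xstar‖ ^ 2 - η t * δ t := by
    intro t
    have hinner : δ t ≤ ⟪G t (x t), x t - xstar⟫ := by
      have := hconv t (x t) xstar
      rw [← neg_sub, inner_neg_right] at this
      linarith
    rw [hx, hstepsize]
    exact norm_sub_smul_sub_sq_le (AdaSPS.stepsize_pos hcp hδ hg t).le hinner
      (AdaSPS.stepsize_mul_le hcp hδ hg hscale t)
  calc ∑ t ∈ Icc 1 T, δ t ≤ ∑ t ∈ range (T + 1), δ t :=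
        sum_le_sum_of_subset_of_nonneg
          (fun t ht => by simp only [mem_Icc, mem_range] at ht ⊢; omega) fun t _ _ => (hδ t).le
    _ ≤ (2 * L * c_p * ‖x 0 - xstar‖ ^ 2) ^ 2 :=
        AdaSPS.sum_range_le_of_stepsize hL hcp hδ hg hgδ (r := fun t => ‖x t - xstar‖ ^ 2)
          (fun t => by positivity) (hstepsize ▸ hdescent) T
    _ = 4 * c_p ^ 2 * L ^ 2 * ‖x 0 - xstar‖ ^ 4 := by ring
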